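/- Let 1 = a_1 < ... < a_k and h_1 as in Selmer's lemma (h_1 = h_0 + ⌈(h_0+1)a_{k-1}/(a_k - a_{k-1})⌉ with h_0 = Σ_{i=1}^{k-1} ⌊a_{i+1}/a_i⌋). Then there exists an integer constant c ≥ -1 such that h·a_k − N_h(a_1,...,a_k) = c for all h ≥ h_1. -/

import Mathlib

open Finset

/-- `n` is representable with weight at most `h` in basis `a 1, ..., a k`. -/
def IsRep (k : ℕ) (a : ℕ → ℕ) (h n : ℕ) : Prop :=
  ∃ x : ℕ → ℕ, ∑ i ∈ Finset.Icc 1 k, x i * a i = n ∧ ∑ i ∈ Finset.Icc 1 k, x i ≤ h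

/-- `postN k a h` is `N_h(a_1,...,a_k)`: the least positive integer not `h`-representable. -/
noncomputable def postN (k : ℕ) (a : ℕ → ℕ) (h : ℕ) : ℕ := sInf {n : ℕ | 0 < n ∧ ¬ IsRep k a h n}

/-- `h_0 = ∑_{i=1}^{k-1} ⌊a_{i+1}/a_i⌋`. -/
def selmerH0 (k : ℕ) (a : ℕ → ℕ) : ℕ := ∑ i ∈ Finset.Icc 1 (k-1), a (i+1) / a i

/-- `h_1 = h_0 + ⌈(h_0+1)·a_{k-1}/(a_k - a_{k-1})⌉`. -/
def selmerH1 (k : ℕ) (a : ℕ → ℕ) : ℕ :=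
  selmerH0 k a +
    ((selmerH0 k a + 1) * a (k-1) + (a k - a (k-1)) - 1) / (a k - a (k-1))

/-- The Frobenius number (as an integer) of the basis `b 1, ..., b k`:
the largest integer not a nonnegative integer combination of the `b i`. -/
noncomputable def FrobZ (k : ℕ) (b : ℕ → ℕ) : ℤ :=
  sSup {n : ℤ | ¬ ∃ x : ℕ → ℕ, ((∑ i ∈ Finset.Icc 1 k, x i * b i : ℕ) : ℤ) = n}

/-- The Frobenius number (as an integer) of the complementary basis
`a_k - a_{k-1}, ..., a_k - a_1, a_k`. -/
noncomputable def FrobCompZ (k : ℕ) (a : ℕ → ℕ) : ℤ :=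
  sSup {n : ℤ | ¬ ∃ y : ℕ → ℕ,
    ((∑ i ∈ Finset.Icc 1 (k-1), y i * (a k - a i) + y k * a k : ℕ) : ℤ) = n}

/- ### Auxiliary lemmas -/

lemma aux_lt_succ_mul_div (a b : ℕ) (hb : 0 < b) : a < (a / b + 1) * b := by
  have hdm := Nat.div_add_mod a b
  have hmod := Nat.mod_lt a hb
  have : (a / b + 1) * b = b * (a / b) + b := by ring
  rw [this]
  omega

lemma aux_ceil_le (m d : ℕ) (hd : 0 < d) : m ≤ d * ((m + d - 1) / d) := by
  rcases Nat.eq_zero_or_pos m with rfl | hm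
  · simp
  · have h1 : m + d - 1 = (m - 1) + d := by omega
    rw [h1, Nat.add_div_right _ hd]
    have h2 : m - 1 < ((m - 1) / d + 1) * d := aux_lt_succ_mul_div _ _ hd
    have h3 : ((m - 1) / d + 1) * d = d * ((m - 1) / d + 1) := by ring
    rw [h3] at h2
    omega

lemma aux_icc_insert_top {j : ℕ} (hj : 1 ≤ j) :
    Finset.Icc 1 j = insert j (Finset.Icc 1 (j - 1)) := by
  ext i; simp only [Finset.mem_Icc, Finset.mem_insert]; omega

lemma aux_not_mem_icc_pred (j : ℕ) : j ∉ Finset.Icc 1 (j - 1) := by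
  simp only [Finset.mem_Icc]; omega

lemma aux_sum_icc_split (f : ℕ → ℕ) {j : ℕ} (hj : 1 ≤ j) :
    ∑ i ∈ Finset.Icc 1 j, f i = f j + ∑ i ∈ Finset.Icc 1 (j - 1), f i := by
  rw [aux_icc_insert_top hj, Finset.sum_insert (aux_not_mem_icc_pred j)]

lemma aux_amono (k : ℕ) (a : ℕ → ℕ)
    (hmono : ∀ i, 1 ≤ i → i < k → a i < a (i + 1)) :
    ∀ i j, 1 ≤ i → i ≤ j → j ≤ k → a i ≤ a j := by
  intro i j h1 hij hjk
  induction j with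
  | zero => omega
  | succ n ih =>
    rcases Nat.eq_or_lt_of_le hij with h | h
    · rw [h]
    · exact le_trans (ih (by omega) (by omega)) (le_of_lt (hmono n (by omega) (by omega)))

lemma aux_greedy (k : ℕ) (a : ℕ → ℕ) (ha1 : a 1 = 1)
    (hmono : ∀ i, 1 ≤ i → i < k → a i < a (i + 1)) :
    ∀ j, 1 ≤ j → j ≤ k → ∀ r, r < a j → ∃ x : ℕ → ℕ,
      ∑ i ∈ Finset.Icc 1 (j - 1), x i * a i = r ∧
      ∑ i ∈ Finset.Icc 1 (j - 1), x i ≤ ∑ i ∈ Finset.Icc 1 (j - 1), a (i + 1) / a i := by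
  intro j hj
  induction j, hj using Nat.le_induction with
  | base =>
    intro _ r hr
    rw [ha1] at hr
    refine ⟨fun _ => 0, ?_, ?_⟩ <;> simp <;> omega
  | succ j hj ih =>
    intro hjk r hr
    have hjk' : j ≤ k := by omega
    have hajpos : 0 < a j := by
      have := aux_amono k a hmono 1 j le_rfl hj hjk'
      omega
    obtain ⟨x', hx'sum, hx'w⟩ := ih hjk' (r % a j) (Nat.mod_lt r hajpos)
    refine ⟨Function.update x' j (r / a j), ?_, ?_⟩
    · rw [Nat.add_sub_cancel,
        aux_sum_icc_split (fun i => Function.update x' j (r / a j) i * a i) hj]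
      have hcongr : ∑ i ∈ Finset.Icc 1 (j - 1), Function.update x' j (r / a j) i * a i
          = ∑ i ∈ Finset.Icc 1 (j - 1), x' i * a i := by
        refine Finset.sum_congr rfl fun i hi => ?_
        have : i ≠ j := by
          simp only [Finset.mem_Icc] at hi; omega
        rw [Function.update_of_ne this]
      simp only [Function.update_self]
      rw [hcongr, hx'sum]
      exact Nat.div_add_mod' r (a j)
    · rw [Nat.add_sub_cancel,
        aux_sum_icc_split (fun i => Function.update x' j (r / a j) i) hj,
        aux_sum_icc_split (fun i => a (i + 1) / a i) hj]
      have hcongr : ∑ i ∈ Finset.Icc 1 (j - 1), Function.update x' j (r / a j) i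
          = ∑ i ∈ Finset.Icc 1 (j - 1), x' i := by
        refine Finset.sum_congr rfl fun i hi => ?_
        have : i ≠ j := by
          simp only [Finset.mem_Icc] at hi; omega
        rw [Function.update_of_ne this]
      simp only [Function.update_self]
      rw [hcongr]
      have hq : r / a j ≤ a (j + 1) / a j := Nat.div_le_div_right (le_of_lt hr)
      omega

lemma aux_rep_of_small (k : ℕ) (a : ℕ → ℕ) (hk : 2 ≤ k) (ha1 : a 1 = 1)
    (hmono : ∀ i, 1 ≤ i → i < k → a i < a (i + 1)) (h n : ℕ)
    (hn : n / a k + selmerH0 k a ≤ h) : IsRep k a h n := by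
  have hk1 : 1 ≤ k := by omega
  have hakpos : 0 < a k := by
    have := aux_amono k a hmono 1 k le_rfl hk1 le_rfl; omega
  obtain ⟨x', hx'sum, hx'w⟩ := aux_greedy k a ha1 hmono k hk1 le_rfl (n % a k)
    (Nat.mod_lt n hakpos)
  refine ⟨Function.update x' k (n / a k), ?_, ?_⟩
  · rw [aux_sum_icc_split (fun i => Function.update x' k (n / a k) i * a i) hk1]
    have hcongr : ∑ i ∈ Finset.Icc 1 (k - 1), Function.update x' k (n / a k) i * a i
        = ∑ i ∈ Finset.Icc 1 (k - 1), x' i * a i := by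
      refine Finset.sum_congr rfl fun i hi => ?_
      have : i ≠ k := by simp only [Finset.mem_Icc] at hi; omega
      rw [Function.update_of_ne this]
    simp only [Function.update_self]
    rw [hcongr, hx'sum]
    exact Nat.div_add_mod' n (a k)
  · rw [aux_sum_icc_split (fun i => Function.update x' k (n / a k) i) hk1]
    have hcongr : ∑ i ∈ Finset.Icc 1 (k - 1), Function.update x' k (n / a k) i
        = ∑ i ∈ Finset.Icc 1 (k - 1), x' i := by
      refine Finset.sum_congr rfl fun i hi => ?_
      have : i ≠ k := by simp only [Finset.mem_Icc] at hi; omega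
      rw [Function.update_of_ne this]
    simp only [Function.update_self]
    rw [hcongr]
    have : ∑ i ∈ Finset.Icc 1 (k - 1), x' i ≤ selmerH0 k a := hx'w
    omega

lemma aux_not_rep_top (k : ℕ) (a : ℕ → ℕ) (hk : 2 ≤ k)
    (hmono : ∀ i, 1 ≤ i → i < k → a i < a (i + 1)) (h : ℕ) :
    ¬ IsRep k a h (h * a k + 1) := by
  rintro ⟨x, hsum, hw⟩
  have hb : ∀ i ∈ Finset.Icc 1 k, x i * a i ≤ x i * a k := by
    intro i hi
    simp only [Finset.mem_Icc] at hi
    exact Nat.mul_le_mul_left _ (aux_amono k a hmono i k hi.1 hi.2 le_rfl)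
  have h1 := Finset.sum_le_sum hb
  rw [hsum, ← Finset.sum_mul] at h1
  have h2 : (∑ i ∈ Finset.Icc 1 k, x i) * a k ≤ h * a k :=
    Nat.mul_le_mul_right _ hw
  omega

lemma aux_postN_mem (k : ℕ) (a : ℕ → ℕ) (hk : 2 ≤ k)
    (hmono : ∀ i, 1 ≤ i → i < k → a i < a (i + 1)) (h : ℕ) :
    (0 < postN k a h ∧ ¬ IsRep k a h (postN k a h)) ∧ postN k a h ≤ h * a k + 1 := by
  have hne : (h * a k + 1) ∈ {n : ℕ | 0 < n ∧ ¬ IsRep k a h n} :=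
    ⟨Nat.succ_pos _, aux_not_rep_top k a hk hmono h⟩
  exact ⟨Nat.sInf_mem ⟨_, hne⟩, Nat.sInf_le hne⟩

lemma aux_rep_lt_postN (k : ℕ) (a : ℕ → ℕ) (h m : ℕ) (hm : 0 < m)
    (hlt : m < postN k a h) : IsRep k a h m := by
  by_contra hcon
  have := Nat.sInf_le (show m ∈ {n : ℕ | 0 < n ∧ ¬ IsRep k a h n} from ⟨hm, hcon⟩)
  rw [postN] at hlt
  omega

lemma aux_postN_lb (k : ℕ) (a : ℕ → ℕ) (hk : 2 ≤ k) (ha1 : a 1 = 1)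
    (hmono : ∀ i, 1 ≤ i → i < k → a i < a (i + 1)) (h : ℕ) (hh : selmerH0 k a ≤ h) :
    (h - selmerH0 k a + 1) * a k ≤ postN k a h := by
  have hakpos : 0 < a k := by
    have := aux_amono k a hmono 1 k le_rfl (by omega) le_rfl; omega
  by_contra hcon
  push_neg at hcon
  obtain ⟨⟨hpos, hnot⟩, _⟩ := aux_postN_mem k a hk hmono h
  apply hnot
  apply aux_rep_of_small k a hk ha1 hmono
  have : postN k a h / a k < h - selmerH0 k a + 1 :=
    (Nat.div_lt_iff_lt_mul hakpos).mpr hcon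
  omega

lemma aux_arith (h0 c d t h : ℕ) (hc : 1 ≤ c) (hd : 1 ≤ d)
    (htd : (h0 + 1) * c ≤ d * t) (hh : h0 + t ≤ h) :
    (h + 1) * c < (h - h0 + 2) * (c + d) := by
  obtain ⟨s, rfl⟩ : ∃ s, h = h0 + s := ⟨h - h0, by omega⟩
  have hcancel : h0 + s - h0 = s := by omega
  rw [hcancel]
  have hs : t ≤ s := by omega
  have h1 : d * t ≤ d * s := Nat.mul_le_mul_left d hs
  nlinarith [htd, h1, hc, hd]

lemma aux_update_sum (k : ℕ) (a : ℕ → ℕ) (hk1 : 1 ≤ k) (x : ℕ → ℕ) (v : ℕ) :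
    (∑ i ∈ Finset.Icc 1 k, Function.update x k v i * a i
      = v * a k + ∑ i ∈ Finset.Icc 1 (k - 1), x i * a i) ∧
    (∑ i ∈ Finset.Icc 1 k, Function.update x k v i
      = v + ∑ i ∈ Finset.Icc 1 (k - 1), x i) := by
  constructor
  · rw [aux_sum_icc_split (fun i => Function.update x k v i * a i) hk1]
    simp only [Function.update_self]
    congr 1
    refine Finset.sum_congr rfl fun i hi => ?_
    have : i ≠ k := by simp only [Finset.mem_Icc] at hi; omega
    rw [Function.update_of_ne this]
  · rw [aux_sum_icc_split (fun i => Function.update x k v i) hk1]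
    simp only [Function.update_self]
    congr 1
    refine Finset.sum_congr rfl fun i hi => ?_
    have : i ≠ k := by simp only [Finset.mem_Icc] at hi; omega
    rw [Function.update_of_ne this]

lemma aux_postN_step (k : ℕ) (a : ℕ → ℕ) (hk : 2 ≤ k) (ha1 : a 1 = 1)
    (hmono : ∀ i, 1 ≤ i → i < k → a i < a (i + 1)) (h : ℕ) (hh : selmerH1 k a ≤ h) :
    postN k a (h + 1) = postN k a h + a k := by
  have hk1 : 1 ≤ k := by omega
  rw [selmerH1] at hh
  set h0 := selmerH0 k a with hh0
  set c := a (k - 1) with hcdef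
  have hkk : k - 1 + 1 = k := by omega
  have hck : c < a k := by
    have := hmono (k - 1) (by omega) (by omega)
    rwa [hkk] at this
  have hc1 : 1 ≤ c := by
    have := aux_amono k a hmono 1 (k - 1) le_rfl (by omega) (by omega); omega
  set d := a k - c with hddef
  have hd1 : 1 ≤ d := by omega
  set t := ((h0 + 1) * c + d - 1) / d with htdef
  have htd : (h0 + 1) * c ≤ d * t := aux_ceil_le _ d (by omega)
  have hh1 : h0 + t ≤ h := hh
  have ht1 : 1 ≤ t := by
    rcases Nat.eq_zero_or_pos t with h' | h'
    · rw [h', Nat.mul_zero] at htd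
      have : 1 ≤ (h0 + 1) * c := Nat.mul_pos (by omega) (by omega)
      omega
    · exact h'
  have hakpos : 0 < a k := by omega
  set N := postN k a h with hN
  obtain ⟨⟨hNpos, hNnotrep⟩, hNub⟩ := aux_postN_mem k a hk hmono h
  have hlb : (h - h0 + 1) * a k ≤ N := aux_postN_lb k a hk ha1 hmono h (by omega)
  have hN2ak : 2 * a k ≤ N := by
    have h2 : 2 ≤ h - h0 + 1 := by omega
    calc 2 * a k ≤ (h - h0 + 1) * a k := Nat.mul_le_mul_right _ h2
      _ ≤ N := hlb
  -- N + a k is not (h+1)-representable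
  have hnotrep : ¬ IsRep k a (h + 1) (N + a k) := by
    rintro ⟨x, hsum, hw⟩
    rw [aux_sum_icc_split (fun i => x i * a i) hk1] at hsum
    rw [aux_sum_icc_split x hk1] at hw
    rcases Nat.eq_zero_or_pos (x k) with hxk | hxk
    · -- x k = 0 : contradiction via size
      rw [hxk] at hsum hw
      simp only [Nat.zero_mul, Nat.zero_add] at hsum hw
      have hb : ∀ i ∈ Finset.Icc 1 (k - 1), x i * a i ≤ x i * c := by
        intro i hi
        simp only [Finset.mem_Icc] at hi
        exact Nat.mul_le_mul_left _ (aux_amono k a hmono i (k - 1) hi.1 hi.2 (by omega))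
      have h1 := Finset.sum_le_sum hb
      rw [hsum, ← Finset.sum_mul] at h1
      have h2 : (∑ i ∈ Finset.Icc 1 (k - 1), x i) * c ≤ (h + 1) * c :=
        Nat.mul_le_mul_right _ hw
      have harr := aux_arith h0 c d t h hc1 hd1 htd hh1
      have hcd : c + d = a k := by omega
      rw [hcd] at harr
      have h3 : (h - h0 + 2) * a k = (h - h0 + 1) * a k + a k := by ring
      linarith
    · -- x k ≥ 1 : N would be h-representable
      obtain ⟨m, hm⟩ : ∃ m, x k = m + 1 := ⟨x k - 1, by omega⟩
      rw [hm] at hsum hw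
      apply hNnotrep
      refine ⟨Function.update x k m, ?_, ?_⟩
      · rw [(aux_update_sum k a hk1 x m).1]
        have hexp : (m + 1) * a k = m * a k + a k := by ring
        rw [hexp] at hsum
        linarith
      · rw [(aux_update_sum k a hk1 x m).2]
        omega
  have hle : postN k a (h + 1) ≤ N + a k := by
    apply Nat.sInf_le
    exact ⟨by omega, hnotrep⟩
  have hge : N + a k ≤ postN k a (h + 1) := by
    by_contra hcon
    push_neg at hcon
    obtain ⟨⟨hN'pos, hN'notrep⟩, _⟩ := aux_postN_mem k a hk hmono (h + 1)
    set N' := postN k a (h + 1) with hN'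
    rcases Nat.lt_or_ge N' N with hlt | hge'
    · -- N' < N : it is h-representable
      obtain ⟨x, hx1, hx2⟩ := aux_rep_lt_postN k a h N' hN'pos hlt
      exact hN'notrep ⟨x, hx1, by omega⟩
    · -- N ≤ N' < N + a k : N' - a k is h-representable
      have hmpos : 0 < N' - a k := by omega
      have hmlt : N' - a k < N := by omega
      obtain ⟨x, hx1, hx2⟩ := aux_rep_lt_postN k a h (N' - a k) hmpos hmlt
      rw [aux_sum_icc_split (fun i => x i * a i) hk1] at hx1
      rw [aux_sum_icc_split x hk1] at hx2
      apply hN'notrep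
      refine ⟨Function.update x k (x k + 1), ?_, ?_⟩
      · rw [(aux_update_sum k a hk1 x (x k + 1)).1]
        have hexp : (x k + 1) * a k = x k * a k + a k := by ring
        rw [hexp]
        have : N' - a k + a k = N' := by omega
        linarith
      · rw [(aux_update_sum k a hk1 x (x k + 1)).2]
        omega
  omega

lemma aux_postN_const (k : ℕ) (a : ℕ → ℕ) (hk : 2 ≤ k) (ha1 : a 1 = 1)
    (hmono : ∀ i, 1 ≤ i → i < k → a i < a (i + 1)) :
    ∀ h, selmerH1 k a ≤ h →
      postN k a h = postN k a (selmerH1 k a) + (h - selmerH1 k a) * a k := by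
  intro h hh
  induction h, hh using Nat.le_induction with
  | base => simp
  | succ h hh ih =>
    rw [aux_postN_step k a hk ha1 hmono h hh, ih]
    have h1 : h + 1 - selmerH1 k a = (h - selmerH1 k a) + 1 := by omega
    rw [h1]
    ring

theorem stmt6 (k : ℕ) (a : ℕ → ℕ) (hk : 2 ≤ k) (ha1 : a 1 = 1)
    (hmono : ∀ i, 1 ≤ i → i < k → a i < a (i + 1)) :
    ∃ c : ℤ, -1 ≤ c ∧ ∀ h : ℕ, selmerH1 k a ≤ h →
      (h * a k : ℤ) - (postN k a h : ℤ) = c := by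
  refine ⟨(selmerH1 k a : ℤ) * (a k : ℤ) - (postN k a (selmerH1 k a) : ℤ), ?_, ?_⟩
  · have hub := (aux_postN_mem k a hk hmono (selmerH1 k a)).2
    have : (postN k a (selmerH1 k a) : ℤ) ≤ (selmerH1 k a : ℤ) * (a k : ℤ) + 1 := by
      exact_mod_cast hub
    linarith
  · intro h hh
    have hconst := aux_postN_const k a hk ha1 hmono h hh
    rw [hconst]
    push_cast [Nat.cast_sub hh]
    ring
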